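/- arXiv:1501.01219 — 5 statements merged into one kernel-verified Lean document; each statement's English description precedes it below -/
import Mathlib

section
/- Let n, p ≥ 1, ρ > 0 and m ∈ {0,…,n}. Let S be a map assigning to every data matrix X ∈ ℝ^{n×p} a symmetric positive semidefinite p×p real matrix S(X), and let Θ̂ be a map assigning to every X ∈ ℝ^{n×p} a symmetric positive definite p×p matrix Θ̂(X) that maximizes the GLASSO objective Q_{S(X)}(Θ) = log det Θ − tr(S(X)Θ) − ρ ∑_{j,k=1}^p |Θ_{jk}| over all symmetric positive definite p×p matrices. Fix X ∈ ℝ^{n×p}. If there exists a finite constant M such that λ₁(S(X')) ≤ λ₁(S(X)) + M for every m-cellwise corruption X' of X, then there exists a finite constant M' such that max(|λ₁(Θ̂(X')) − λ₁(Θ̂(X))|, |λ_p(Θ̂(X'))⁻¹ − λ_p(Θ̂(X))⁻¹|) ≤ M' for every m-cellwise corruption X' of X. (This is the content of Theorem 1: the precision matrix estimator obtained by plugging S into the GLASSO inherits the explosion breakdown point of S under cellwise contamination.) -/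
/-!
Optimality of `Θhat X'` against the identity, together with `0 ≤ tr (S Θ)` and
`tr Θ ≤ ∑ⱼₖ |Θⱼₖ|`, gives `-tr S - ρ p ≤ log det Θ - ρ tr Θ`, and `tr S(X') ≤ p (λ₁(S X) + M)`
uniformly over corruptions. Bounding `log det Θ = ∑ log λᵢ` by `∑ ((ρ/2) λᵢ - 1 - log (ρ/2))`
yields a uniform bound on `tr Θhat X'`, hence on all its eigenvalues; dropping the trace term
yields a uniform lower bound on `det Θhat X'`, and dividing it by the product of the other
eigenvalues keeps the smallest eigenvalue away from `0`.
-/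

open Matrix

/-- The largest eigenvalue of a real matrix (as the supremum of its set of eigenvalues). -/
noncomputable def maxEig {p : ℕ} (A : Matrix (Fin p) (Fin p) ℝ) : ℝ :=
  sSup {μ : ℝ | ∃ v : Fin p → ℝ, v ≠ 0 ∧ A.mulVec v = μ • v}

/-- The smallest eigenvalue of a real matrix (as the infimum of its set of eigenvalues). -/
noncomputable def minEig {p : ℕ} (A : Matrix (Fin p) (Fin p) ℝ) : ℝ :=
  sInf {μ : ℝ | ∃ v : Fin p → ℝ, v ≠ 0 ∧ A.mulVec v = μ • v}

/-- The GLASSO objective `Q_S(Θ) = log det Θ − tr(SΘ) − ρ ∑_{j,k} |Θ_{jk}|`. -/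
noncomputable def glassoObj {p : ℕ} (ρ : ℝ) (S Θ : Matrix (Fin p) (Fin p) ℝ) : ℝ :=
  Real.log Θ.det - (S * Θ).trace - ρ * ∑ j, ∑ k, |Θ j k|

/-- `X'` is an `m`-cellwise corruption of `X`: in every column at most `m` cells differ. -/
def CellwiseCorruption {n p : ℕ} (m : ℕ) (X X' : Matrix (Fin n) (Fin p) ℝ) : Prop :=
  ∀ j : Fin p, {i : Fin n | X' i j ≠ X i j}.ncard ≤ m

namespace Matrix

variable {n : Type*} [Fintype n] [DecidableEq n] {A B : Matrix n n ℝ}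

theorem setOf_exists_mulVec_eq_smul_eq_spectrum (A : Matrix n n ℝ) :
    {μ : ℝ | ∃ v : n → ℝ, v ≠ 0 ∧ A *ᵥ v = μ • v} = spectrum ℝ A := by
  ext μ
  rw [← AlgEquiv.spectrum_eq (toLinAlgEquiv' (R := ℝ)) A,
    ← Module.End.hasEigenvalue_iff_mem_spectrum, Module.End.hasEigenvalue_iff,
    Submodule.ne_bot_iff]
  simp [and_comm]

open scoped MatrixOrder in
theorem PosSemidef.trace_mul_nonneg (hA : A.PosSemidef) (hB : B.PosSemidef) :
    0 ≤ (A * B).trace := by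
  obtain ⟨C, rfl⟩ : ∃ C : Matrix n n ℝ, B = Cᴴ * C :=
    CStarAlgebra.nonneg_iff_eq_star_mul_self.mp hB.nonneg
  rw [trace_mul_comm, Matrix.mul_assoc, trace_mul_comm]
  exact (hA.mul_mul_conjTranspose_same C).trace_nonneg

omit [DecidableEq n] in
theorem trace_le_sum_sum_abs (A : Matrix n n ℝ) : A.trace ≤ ∑ j, ∑ k, |A j k| :=
  Finset.sum_le_sum fun j _ => (le_abs_self _).trans <|
    Finset.single_le_sum (fun k _ => abs_nonneg (A j k)) (Finset.mem_univ j)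

theorem IsHermitian.trace_eq_sum_eigenvalues_real (hA : A.IsHermitian) :
    A.trace = ∑ i, hA.eigenvalues i := by
  simpa using hA.trace_eq_sum_eigenvalues

theorem IsHermitian.det_eq_prod_eigenvalues_real (hA : A.IsHermitian) :
    A.det = ∏ i, hA.eigenvalues i := by
  simpa using hA.det_eq_prod_eigenvalues

theorem PosSemidef.eigenvalues_le_trace (hA : A.PosSemidef) (j : n) :
    hA.1.eigenvalues j ≤ A.trace := by
  rw [hA.1.trace_eq_sum_eigenvalues_real]
  exact Finset.single_le_sum (fun i _ => hA.eigenvalues_nonneg i) (Finset.mem_univ j)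

theorem PosDef.log_det_le (hA : A.PosDef) {c : ℝ} (hc : 0 < c) :
    Real.log A.det ≤ c * A.trace - Fintype.card n * (1 + Real.log c) := by
  have hlog (i : n) :
      Real.log (hA.1.eigenvalues i) ≤ c * hA.1.eigenvalues i - (1 + Real.log c) := by
    have hi := hA.eigenvalues_pos i
    have := Real.log_le_sub_one_of_pos (mul_pos hc hi)
    rw [Real.log_mul hc.ne' hi.ne'] at this
    linarith
  calc Real.log A.det = ∑ i, Real.log (hA.1.eigenvalues i) := by
        rw [hA.1.det_eq_prod_eigenvalues_real, Real.log_prod fun i _ => (hA.eigenvalues_pos i).ne']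
    _ ≤ ∑ i, (c * hA.1.eigenvalues i - (1 + Real.log c)) := Finset.sum_le_sum fun i _ => hlog i
    _ = c * A.trace - Fintype.card n * (1 + Real.log c) := by
        rw [Finset.sum_sub_distrib, ← Finset.mul_sum, hA.1.trace_eq_sum_eigenvalues_real]
        simp [mul_add]

theorem PosDef.det_div_pow_le_eigenvalues (hA : A.PosDef) {b : ℝ} (hb : A.trace ≤ b) (j : n) :
    A.det / b ^ (Fintype.card n - 1) ≤ hA.1.eigenvalues j := by
  have hpos := hA.eigenvalues_pos
  have hle (i : n) : hA.1.eigenvalues i ≤ b := (hA.posSemidef.eigenvalues_le_trace i).trans hb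
  have hb : 0 < b := (hpos j).trans_le (hle j)
  have hrest : ∏ i ∈ Finset.univ.erase j, hA.1.eigenvalues i ≤ b ^ (Fintype.card n - 1) := by
    calc ∏ i ∈ Finset.univ.erase j, hA.1.eigenvalues i ≤ ∏ _i ∈ Finset.univ.erase j, b :=
          Finset.prod_le_prod (fun i _ => (hpos i).le) fun i _ => hle i
      _ = b ^ (Fintype.card n - 1) := by
          rw [Finset.prod_const, Finset.card_erase_of_mem (Finset.mem_univ j), Finset.card_univ]
  rw [div_le_iff₀ (pow_pos hb _), hA.1.det_eq_prod_eigenvalues_real,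
    ← Finset.mul_prod_erase _ _ (Finset.mem_univ j)]
  exact mul_le_mul_of_nonneg_left hrest (hpos j).le

end Matrix

namespace Matrix.IsHermitian

variable {p : ℕ} {A : Matrix (Fin p) (Fin p) ℝ}

theorem maxEig_eq (hA : A.IsHermitian) :
    maxEig A = sSup (Set.range hA.eigenvalues) := by
  rw [maxEig, ← hA.spectrum_real_eq_range_eigenvalues, ← setOf_exists_mulVec_eq_smul_eq_spectrum]

theorem minEig_eq (hA : A.IsHermitian) :
    minEig A = sInf (Set.range hA.eigenvalues) := by
  rw [minEig, ← hA.spectrum_real_eq_range_eigenvalues, ← setOf_exists_mulVec_eq_smul_eq_spectrum]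

theorem eigenvalues_le_maxEig (hA : A.IsHermitian) (i : Fin p) :
    hA.eigenvalues i ≤ maxEig A :=
  hA.maxEig_eq ▸ le_csSup (Set.finite_range _).bddAbove ⟨i, rfl⟩

theorem maxEig_mem_range [NeZero p] (hA : A.IsHermitian) :
    maxEig A ∈ Set.range hA.eigenvalues :=
  hA.maxEig_eq ▸ (Set.range_nonempty _).csSup_mem (Set.finite_range _)

theorem minEig_mem_range [NeZero p] (hA : A.IsHermitian) :
    minEig A ∈ Set.range hA.eigenvalues :=
  hA.minEig_eq ▸ (Set.range_nonempty _).csInf_mem (Set.finite_range _)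

theorem trace_le_mul_maxEig (hA : A.IsHermitian) : A.trace ≤ p * maxEig A := by
  rw [hA.trace_eq_sum_eigenvalues_real]
  simpa using Finset.sum_le_sum fun i (_ : i ∈ Finset.univ) => hA.eigenvalues_le_maxEig i

end Matrix.IsHermitian

theorem cellwiseCorruption_refl {n p m : ℕ} (X : Matrix (Fin n) (Fin p) ℝ) :
    CellwiseCorruption m X X := fun j => by simp

section Glasso

variable {p : ℕ} {ρ C : ℝ} {T Θ : Matrix (Fin p) (Fin p) ℝ}

theorem glassoObj_one (ρ : ℝ) (T : Matrix (Fin p) (Fin p) ℝ) :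
    glassoObj ρ T 1 = -T.trace - ρ * p := by
  simp [glassoObj, one_apply, apply_ite]

theorem glassoObj_le_log_det_sub_mul_trace (hρ : 0 ≤ ρ) (hT : T.PosSemidef) (hΘ : Θ.PosSemidef) :
    glassoObj ρ T Θ ≤ Real.log Θ.det - ρ * Θ.trace := by
  have := hT.trace_mul_nonneg hΘ
  have := mul_le_mul_of_nonneg_left Θ.trace_le_sum_sum_abs hρ
  rw [glassoObj]
  linarith

/-- The bound on `tr Θ` that `PosDef.log_det_le` with `c = ρ / 2` gives for any `Θ` beating the
identity in the GLASSO objective with `tr T ≤ C`. -/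
noncomputable def glassoTraceBound (p : ℕ) (ρ C : ℝ) : ℝ :=
  2 / ρ * (C + p * (ρ - 1 - Real.log (ρ / 2)))

noncomputable def glassoEigenvalueLowerBound (p : ℕ) (ρ C : ℝ) : ℝ :=
  Real.exp (-(C + ρ * p)) / glassoTraceBound p ρ C ^ (p - 1)

theorem log_det_sub_mul_trace_of_glassoObj_one_le (hρ : 0 ≤ ρ) (hT : T.PosSemidef)
    (hC : T.trace ≤ C) (hΘ : Θ.PosDef) (hopt : glassoObj ρ T 1 ≤ glassoObj ρ T Θ) :
    -(C + ρ * p) ≤ Real.log Θ.det - ρ * Θ.trace := by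
  have := glassoObj_le_log_det_sub_mul_trace hρ hT hΘ.posSemidef
  rw [glassoObj_one] at hopt
  linarith

theorem trace_le_glassoTraceBound (hρ : 0 < ρ) (hT : T.PosSemidef) (hC : T.trace ≤ C)
    (hΘ : Θ.PosDef) (hopt : glassoObj ρ T 1 ≤ glassoObj ρ T Θ) :
    Θ.trace ≤ glassoTraceBound p ρ C := by
  have h₁ := log_det_sub_mul_trace_of_glassoObj_one_le hρ.le hT hC hΘ hopt
  have h₂ := hΘ.log_det_le (half_pos hρ)
  rw [Fintype.card_fin] at h₂
  rw [glassoTraceBound, div_mul_eq_mul_div, le_div_iff₀ hρ]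
  linarith

theorem exp_le_det_of_glassoObj_one_le (hρ : 0 ≤ ρ) (hT : T.PosSemidef) (hC : T.trace ≤ C)
    (hΘ : Θ.PosDef) (hopt : glassoObj ρ T 1 ≤ glassoObj ρ T Θ) :
    Real.exp (-(C + ρ * p)) ≤ Θ.det := by
  have h₁ := log_det_sub_mul_trace_of_glassoObj_one_le hρ hT hC hΘ hopt
  have h₂ := mul_nonneg hρ hΘ.posSemidef.trace_nonneg
  rw [← Real.le_log_iff_exp_le hΘ.det_pos]
  linarith

theorem eigenvalues_mem_Icc_of_glassoObj_one_le (hρ : 0 < ρ) (hT : T.PosSemidef)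
    (hC : T.trace ≤ C) (hΘ : Θ.PosDef) (hopt : glassoObj ρ T 1 ≤ glassoObj ρ T Θ) (i : Fin p) :
    hΘ.1.eigenvalues i ∈
      Set.Icc (glassoEigenvalueLowerBound p ρ C) (glassoTraceBound p ρ C) := by
  have htr := trace_le_glassoTraceBound hρ hT hC hΘ hopt
  refine ⟨?_, (hΘ.posSemidef.eigenvalues_le_trace i).trans htr⟩
  calc glassoEigenvalueLowerBound p ρ C ≤ Θ.det / glassoTraceBound p ρ C ^ (p - 1) := by
        have hB : 0 ≤ glassoTraceBound p ρ C := hΘ.posSemidef.trace_nonneg.trans htr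
        unfold glassoEigenvalueLowerBound
        gcongr
        exact exp_le_det_of_glassoObj_one_le hρ.le hT hC hΘ hopt
    _ ≤ hΘ.1.eigenvalues i := by simpa using hΘ.det_div_pow_le_eigenvalues htr i

end Glasso

theorem glasso_inherits_breakdown_general
    (n p : ℕ) (hp : 1 ≤ p) (ρ : ℝ) (hρ : 0 < ρ) (m : ℕ)
    (S : Matrix (Fin n) (Fin p) ℝ → Matrix (Fin p) (Fin p) ℝ)
    (hS : ∀ X, (S X).PosSemidef)
    (Θhat : Matrix (Fin n) (Fin p) ℝ → Matrix (Fin p) (Fin p) ℝ)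
    (hΘpd : ∀ X, (Θhat X).PosDef)
    (hΘmax : ∀ X, ∀ Θ : Matrix (Fin p) (Fin p) ℝ, Θ.PosDef →
      glassoObj ρ (S X) Θ ≤ glassoObj ρ (S X) (Θhat X))
    (X : Matrix (Fin n) (Fin p) ℝ) (M : ℝ)
    (hM : ∀ X', CellwiseCorruption m X X' → maxEig (S X') ≤ maxEig (S X) + M) :
    ∃ M' : ℝ, ∀ X', CellwiseCorruption m X X' →
      max |maxEig (Θhat X') - maxEig (Θhat X)|
          |(minEig (Θhat X'))⁻¹ - (minEig (Θhat X))⁻¹| ≤ M' := by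
  have : NeZero p := ⟨by omega⟩
  set C := p * (maxEig (S X) + M)
  set lb := glassoEigenvalueLowerBound p ρ C
  set ub := glassoTraceBound p ρ C
  have hbounds (X') (hX' : CellwiseCorruption m X X') (i : Fin p) :
      (hΘpd X').1.eigenvalues i ∈ Set.Icc lb ub := by
    have hC : (S X').trace ≤ C := (hS X').1.trace_le_mul_maxEig.trans <|
      mul_le_mul_of_nonneg_left (hM X' hX') p.cast_nonneg
    exact eigenvalues_mem_Icc_of_glassoObj_one_le hρ (hS X') hC (hΘpd X') (hΘmax X' 1 .one) i
  have hXX : CellwiseCorruption m X X := cellwiseCorruption_refl X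
  have hlb : 0 < lb := by
    have hub : 0 < ub := ((hΘpd X).eigenvalues_pos 0).trans_le (hbounds X hXX 0).2
    exact div_pos (Real.exp_pos _) (pow_pos hub _)
  have hmax (X') (hX' : CellwiseCorruption m X X') : maxEig (Θhat X') ∈ Set.Icc 0 ub := by
    obtain ⟨i, hi⟩ := (hΘpd X').1.maxEig_mem_range
    exact hi ▸ ⟨hlb.le.trans (hbounds X' hX' i).1, (hbounds X' hX' i).2⟩
  have hmin (X') (hX' : CellwiseCorruption m X X') : (minEig (Θhat X'))⁻¹ ∈ Set.Icc 0 lb⁻¹ := by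
    obtain ⟨i, hi⟩ := (hΘpd X').1.minEig_mem_range
    have := (hbounds X' hX' i).1
    exact hi ▸ ⟨inv_nonneg.2 (hlb.le.trans this), inv_anti₀ hlb this⟩
  refine ⟨max ub lb⁻¹, fun X' hX' => max_le_max ?_ ?_⟩
  · simpa using abs_sub_le_of_le_of_le (hmax X' hX').1 (hmax X' hX').2
      (hmax X hXX).1 (hmax X hXX).2
  · simpa using abs_sub_le_of_le_of_le (hmin X' hX').1 (hmin X' hX').2
      (hmin X hXX).1 (hmin X hXX).2

theorem glasso_inherits_breakdown
    (n p : ℕ) (hn : 1 ≤ n) (hp : 1 ≤ p) (ρ : ℝ) (hρ : 0 < ρ) (m : ℕ) (hm : m ≤ n)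
    (S : Matrix (Fin n) (Fin p) ℝ → Matrix (Fin p) (Fin p) ℝ)
    (hS : ∀ X, (S X).PosSemidef)
    (Θhat : Matrix (Fin n) (Fin p) ℝ → Matrix (Fin p) (Fin p) ℝ)
    (hΘpd : ∀ X, (Θhat X).PosDef)
    (hΘmax : ∀ X, ∀ Θ : Matrix (Fin p) (Fin p) ℝ, Θ.PosDef →
      glassoObj ρ (S X) Θ ≤ glassoObj ρ (S X) (Θhat X))
    (X : Matrix (Fin n) (Fin p) ℝ) (M : ℝ)
    (hM : ∀ X', CellwiseCorruption m X X' → maxEig (S X') ≤ maxEig (S X) + M) :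
    ∃ M' : ℝ, ∀ X', CellwiseCorruption m X X' →
      max |maxEig (Θhat X') - maxEig (Θhat X)|
          |(minEig (Θhat X'))⁻¹ - (minEig (Θhat X))⁻¹| ≤ M' :=
  glasso_inherits_breakdown_general n p hp ρ hρ m S hS Θhat hΘpd hΘmax X M hM
end

section
/- Let n, p ≥ 1 and m ∈ {0,…,n}. Let scale : ℝⁿ → ℝ be a nonnegative function and let r : ℝⁿ × ℝⁿ → ℝ satisfy |r(u,v)| ≤ 1 and r(u,v) = r(v,u) for all u, v ∈ ℝⁿ. For X ∈ ℝ^{n×p} with columns x¹,…,x^p, define the pairwise-correlation-based covariance matrix S(X) by S(X)_{jk} = scale(x^j)·scale(x^k)·r(x^j, x^k). Fix X ∈ ℝ^{n×p}. If for every j ∈ {1,…,p} there exists a finite constant M_j such that scale(x') ≤ M_j for every vector x' ∈ ℝⁿ that differs from x^j in at most m entries, then there exists a finite constant M such that |λ₁(S(X')) − λ₁(S(X))| ≤ M for every m-cellwise corruption X' of X. (This is the content of Proposition 1: the explosion breakdown point under cellwise contamination of the covariance estimator based on pairwise correlations is at least that of the univariate scale estimator used.) -/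
open Matrix

/-!
Every eigenvalue `μ` of a `p × p` matrix with entries bounded by `B` in absolute value satisfies
`|μ| ≤ p B` (evaluate `A v = μ v` at a coordinate where `|v i|` is maximal), hence so does the
largest one. Under an `m`-cellwise corruption every column of `X'` lies within `m` cells of the
corresponding column of `X`, so its scale is bounded by `max_j M_j`, and the entries of `S X'`
are bounded by the square of that constant, uniformly in `X'`.
-/

lemma abs_le_card_mul_of_mulVec_eq_smul {ι : Type*} [Fintype ι] {A : Matrix ι ι ℝ} {B μ : ℝ}
    {v : ι → ℝ} (hA : ∀ i j, |A i j| ≤ B) (hv : v ≠ 0) (hμ : A *ᵥ v = μ • v) :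
    |μ| ≤ Fintype.card ι * B := by
  obtain ⟨i₀, -⟩ := Function.ne_iff.mp hv
  have : Nonempty ι := ⟨i₀⟩
  have hB : 0 ≤ B := (abs_nonneg _).trans (hA i₀ i₀)
  have hrow : ∀ i, ‖(μ • v) i‖ ≤ Fintype.card ι * B * ‖v‖ := by
    intro i
    rw [← hμ]
    calc ‖(A *ᵥ v) i‖ = |∑ j, A i j * v j| := rfl
      _ ≤ ∑ j, |A i j| * ‖v j‖ := by
          simpa only [abs_mul, Real.norm_eq_abs] using
            Finset.abs_sum_le_sum_abs (fun j => A i j * v j) Finset.univ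
      _ ≤ ∑ _j : ι, B * ‖v‖ := Finset.sum_le_sum fun j _ =>
          mul_le_mul (hA i j) (norm_le_pi_norm v j) (norm_nonneg _) hB
      _ = Fintype.card ι * B * ‖v‖ := by simp only [Finset.sum_const, Finset.card_univ,
          nsmul_eq_mul, mul_assoc]
  have hnorm := (pi_norm_le_iff_of_nonempty _).2 hrow
  rw [norm_smul, Real.norm_eq_abs] at hnorm
  exact le_of_mul_le_mul_right hnorm (norm_pos_iff.2 hv)

lemma Real.abs_sSup_le {s : Set ℝ} {a : ℝ} (ha : 0 ≤ a) (hs : ∀ x ∈ s, |x| ≤ a) :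
    |sSup s| ≤ a := by
  have hle : ∀ x ∈ s, x ≤ a := fun x hx => (abs_le.1 (hs x hx)).2
  refine abs_le.2 ⟨?_, Real.sSup_le hle ha⟩
  obtain rfl | ⟨x, hx⟩ := s.eq_empty_or_nonempty
  · simpa using ha
  · exact (abs_le.1 (hs x hx)).1.trans (le_csSup ⟨a, hle⟩ hx)

lemma abs_maxEig_le {p : ℕ} {A : Matrix (Fin p) (Fin p) ℝ} {B : ℝ} (hB : 0 ≤ B)
    (hA : ∀ i j, |A i j| ≤ B) : |maxEig A| ≤ p * B :=
  Real.abs_sSup_le (by positivity) fun _ ⟨_, hv, hμ⟩ => by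
    simpa using abs_le_card_mul_of_mulVec_eq_smul hA hv hμ

lemma CellwiseCorruption.refl {n p : ℕ} (m : ℕ) (X : Matrix (Fin n) (Fin p) ℝ) :
    CellwiseCorruption m X X := fun j => by simp

lemma abs_mul_mul_le_sq {s t ρ C : ℝ} (hs : 0 ≤ s) (ht : 0 ≤ t) (hsC : s ≤ C) (htC : t ≤ C)
    (hρ : |ρ| ≤ 1) : |s * t * ρ| ≤ C ^ 2 := by
  have hC : 0 ≤ C := hs.trans hsC
  rw [abs_mul, abs_mul, abs_of_nonneg hs, abs_of_nonneg ht, sq, ← mul_one (C * C)]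
  exact mul_le_mul (mul_le_mul hsC htC ht hC) hρ (abs_nonneg _) (mul_nonneg hC hC)

theorem pairwise_correlation_cov_breakdown_general
    (n p : ℕ) (m : ℕ)
    (scale : (Fin n → ℝ) → ℝ) (hscale : ∀ u, 0 ≤ scale u)
    (r : (Fin n → ℝ) → (Fin n → ℝ) → ℝ)
    (hr1 : ∀ u v, |r u v| ≤ 1)
    (S : Matrix (Fin n) (Fin p) ℝ → Matrix (Fin p) (Fin p) ℝ)
    (hSdef : ∀ (X : Matrix (Fin n) (Fin p) ℝ) (j k : Fin p),
      S X j k = scale (fun i => X i j) * scale (fun i => X i k) *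
        r (fun i => X i j) (fun i => X i k))
    (X : Matrix (Fin n) (Fin p) ℝ)
    (h : ∀ j : Fin p, ∃ Mj : ℝ, ∀ x' : Fin n → ℝ,
      {i : Fin n | x' i ≠ X i j}.ncard ≤ m → scale x' ≤ Mj) :
    ∃ M : ℝ, ∀ X', CellwiseCorruption m X X' →
      |maxEig (S X') - maxEig (S X)| ≤ M := by
  choose M hM using h
  obtain ⟨C, hC⟩ := (Set.finite_range M).bddAbove
  set C' := max C 0
  have hscale_le : ∀ X', CellwiseCorruption m X X' → ∀ j, scale (fun i => X' i j) ≤ C' :=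
    fun X' hX' j => (hM j _ (hX' j)).trans ((hC ⟨j, rfl⟩).trans (le_max_left _ _))
  have hmaxEig : ∀ X', CellwiseCorruption m X X' → |maxEig (S X')| ≤ p * C' ^ 2 :=
    fun X' hX' => abs_maxEig_le (by positivity) fun j k => by
      rw [hSdef]
      exact abs_mul_mul_le_sq (hscale _) (hscale _) (hscale_le X' hX' j) (hscale_le X' hX' k)
        (hr1 _ _)
  refine ⟨2 * (p * C' ^ 2), fun X' hX' => ?_⟩
  linarith [abs_sub (maxEig (S X')) (maxEig (S X)), hmaxEig X' hX',
    hmaxEig X (CellwiseCorruption.refl m X)]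

theorem pairwise_correlation_cov_breakdown
    (n p : ℕ) (hn : 1 ≤ n) (hp : 1 ≤ p) (m : ℕ) (hm : m ≤ n)
    (scale : (Fin n → ℝ) → ℝ) (hscale : ∀ u, 0 ≤ scale u)
    (r : (Fin n → ℝ) → (Fin n → ℝ) → ℝ)
    (hr1 : ∀ u v, |r u v| ≤ 1) (hr2 : ∀ u v, r u v = r v u)
    (S : Matrix (Fin n) (Fin p) ℝ → Matrix (Fin p) (Fin p) ℝ)
    (hSdef : ∀ (X : Matrix (Fin n) (Fin p) ℝ) (j k : Fin p),
      S X j k = scale (fun i => X i j) * scale (fun i => X i k) *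
        r (fun i => X i j) (fun i => X i k))
    (X : Matrix (Fin n) (Fin p) ℝ)
    (h : ∀ j : Fin p, ∃ Mj : ℝ, ∀ x' : Fin n → ℝ,
      {i : Fin n | x' i ≠ X i j}.ncard ≤ m → scale x' ≤ Mj) :
    ∃ M : ℝ, ∀ X', CellwiseCorruption m X X' →
      |maxEig (S X') - maxEig (S X)| ≤ M :=
  pairwise_correlation_cov_breakdown_general n p m scale hscale r hr1 S hSdef X h
end

section
/- Let p ≥ 1, ρ > 0, let S ∈ ℝ^{p×p} be symmetric positive semidefinite, let E ∈ ℝ^{p×p} be symmetric with |E_{jk}| ≤ 1 for all j, k, and let Θ ∈ ℝ^{p×p} be symmetric positive definite such that (S + ρE)·Θ = I_p. Then λ_p(Θ)⁻¹ ≤ λ₁(S) + ρp, i.e. the smallest eigenvalue of Θ satisfies λ_p(Θ) ≥ 1/(λ₁(S) + ρp). -/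
open Matrix

/-!
Let `Θ v = μ v` with `μ = λ_p(Θ)` and `v ≠ 0`. The first-order condition `(S + ρE) Θ = I` makes `v` an
eigenvector of `S + ρE` with eigenvalue `μ⁻¹`, so `μ⁻¹ ‖v‖² = vᵀ S v + ρ vᵀ E v`. The first term is at
most `λ₁(S) ‖v‖²`, and since the entries of `E` are bounded by `1`,
`vᵀ E v ≤ (∑ⱼ |vⱼ|)² ≤ p ‖v‖²` by Cauchy–Schwarz.
-/

namespace Matrix

variable {n K : Type*} [Fintype n]

theorem dotProduct_mulVec_le_card_mul_of_abs_le_one {E : Matrix n n ℝ}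
    (hE : ∀ j k, |E j k| ≤ 1) (v : n → ℝ) : v ⬝ᵥ E *ᵥ v ≤ Fintype.card n * (v ⬝ᵥ v) :=
  calc v ⬝ᵥ E *ᵥ v ≤ ∑ j, ∑ k, |v j| * |v k| := by
        simp only [dotProduct, mulVec, Finset.mul_sum]
        refine Finset.sum_le_sum fun j _ => Finset.sum_le_sum fun k _ => ?_
        calc v j * (E j k * v k) ≤ |v j| * (|E j k| * |v k|) := by
              rw [← abs_mul, ← abs_mul]; exact le_abs_self _
          _ ≤ |v j| * |v k| := by
              gcongr; exact mul_le_of_le_one_left (abs_nonneg _) (hE j k)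
    _ = (∑ j, |v j|) ^ 2 := by rw [sq, Finset.sum_mul_sum]
    _ ≤ Fintype.card n * ∑ j, |v j| ^ 2 := sq_sum_le_card_mul_sum_sq
    _ = Fintype.card n * (v ⬝ᵥ v) := by simp [dotProduct, sq]

variable [DecidableEq n]

theorem mem_spectrum_iff_exists_mulVec_eq_smul [Field K] {A : Matrix n n K} {μ : K} :
    μ ∈ spectrum K A ↔ ∃ v : n → K, v ≠ 0 ∧ A *ᵥ v = μ • v := by
  rw [← spectrum_toLin', ← Module.End.hasEigenvalue_iff_mem_spectrum,
    Module.End.hasEigenvalue_iff, Submodule.ne_bot_iff]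
  simp [and_comm]

theorem mulVec_eq_inv_smul_of_mul_eq_one [Field K] {A B : Matrix n n K} (hAB : A * B = 1)
    {v : n → K} {μ : K} (hv : B *ᵥ v = μ • v) : A *ᵥ v = μ⁻¹ • v := by
  have hv' : v = μ • A *ᵥ v := by
    rw [← mulVec_smul, ← hv, mulVec_mulVec, hAB, one_mulVec]
  rcases eq_or_ne μ 0 with rfl | hμ
  · rw [zero_smul] at hv'
    simp [hv']
  · calc A *ᵥ v = μ⁻¹ • μ • A *ᵥ v := by rw [smul_smul, inv_mul_cancel₀ hμ, one_smul]
      _ = μ⁻¹ • v := by rw [← hv']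

theorem IsHermitian.dotProduct_mulVec_le {A : Matrix n n ℝ} (hA : A.IsHermitian) {c : ℝ}
    (hc : ∀ x ∈ spectrum ℝ A, x ≤ c) (v : n → ℝ) : v ⬝ᵥ A *ᵥ v ≤ c * (v ⬝ᵥ v) := by
  open scoped MatrixOrder in
  have hle : A ≤ algebraMap ℝ _ c := le_algebraMap_of_spectrum_le hc hA.isSelfAdjoint
  rw [Algebra.algebraMap_eq_smul_one, le_iff] at hle
  simpa [sub_mulVec, smul_mulVec, dotProduct_smul] using hle.dotProduct_mulVec_nonneg v

end Matrix

theorem le_maxEig {p : ℕ} {A : Matrix (Fin p) (Fin p) ℝ} {x : ℝ} (hx : x ∈ spectrum ℝ A) :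
    x ≤ maxEig A := by
  simp only [maxEig, ← mem_spectrum_iff_exists_mulVec_eq_smul, Set.ofPred_mem_eq]
  exact le_csSup A.finite_spectrum.bddAbove hx

theorem Matrix.IsHermitian.minEig_mem_spectrum {p : ℕ} [NeZero p] {A : Matrix (Fin p) (Fin p) ℝ}
    (hA : A.IsHermitian) : minEig A ∈ spectrum ℝ A := by
  simp only [minEig, ← mem_spectrum_iff_exists_mulVec_eq_smul, Set.ofPred_mem_eq]
  refine Set.Nonempty.csInf_mem ?_ A.finite_spectrum
  rw [hA.spectrum_real_eq_range_eigenvalues]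
  exact Set.range_nonempty _

theorem smallest_eigenvalue_bound_from_FOC_general
    (p : ℕ) (hp : 1 ≤ p) (ρ : ℝ) (hρ : 0 < ρ)
    (S : Matrix (Fin p) (Fin p) ℝ) (hS : S.PosSemidef)
    (E : Matrix (Fin p) (Fin p) ℝ) (hE : ∀ j k, |E j k| ≤ 1)
    (Θ : Matrix (Fin p) (Fin p) ℝ) (hΘ : Θ.PosDef)
    (hFOC : (S + ρ • E) * Θ = 1) :
    (minEig Θ)⁻¹ ≤ maxEig S + ρ * p := by
  have : NeZero p := ⟨by omega⟩
  obtain ⟨v, hv, hΘv⟩ :=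
    mem_spectrum_iff_exists_mulVec_eq_smul.mp hΘ.isHermitian.minEig_mem_spectrum
  have hquad : (minEig Θ)⁻¹ * (v ⬝ᵥ v) = v ⬝ᵥ S *ᵥ v + ρ * (v ⬝ᵥ E *ᵥ v) := by
    rw [← smul_eq_mul, ← dotProduct_smul, ← mulVec_eq_inv_smul_of_mul_eq_one hFOC hΘv,
      add_mulVec, smul_mulVec, dotProduct_add, dotProduct_smul, smul_eq_mul]
  have hS_le := hS.isHermitian.dotProduct_mulVec_le (fun _ ↦ le_maxEig) v
  have hE_le := dotProduct_mulVec_le_card_mul_of_abs_le_one hE v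
  rw [Fintype.card_fin] at hE_le
  have hv_pos : 0 < v ⬝ᵥ v := by simpa using dotProduct_star_self_pos_iff.mpr hv
  refine le_of_mul_le_mul_right ?_ hv_pos
  rw [hquad, add_mul, mul_assoc]
  gcongr

theorem smallest_eigenvalue_bound_from_FOC
    (p : ℕ) (hp : 1 ≤ p) (ρ : ℝ) (hρ : 0 < ρ)
    (S : Matrix (Fin p) (Fin p) ℝ) (hS : S.PosSemidef)
    (E : Matrix (Fin p) (Fin p) ℝ) (hEsymm : E.IsSymm) (hE : ∀ j k, |E j k| ≤ 1)
    (Θ : Matrix (Fin p) (Fin p) ℝ) (hΘ : Θ.PosDef)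
    (hFOC : (S + ρ • E) * Θ = 1) :
    (minEig Θ)⁻¹ ≤ maxEig S + ρ * p :=
  smallest_eigenvalue_bound_from_FOC_general p hp ρ hρ S hS E hE Θ hΘ hFOC
end

section
/- Let p ≥ 1, ρ > 0, let S ∈ ℝ^{p×p} be symmetric positive semidefinite, and let Θ̂ be a symmetric positive definite p×p matrix that maximizes the GLASSO objective Q_S(Θ) = log det Θ − tr(SΘ) − ρ ∑_{j,k=1}^p |Θ_{jk}| over all symmetric positive definite p×p matrices. Then λ_p(Θ̂)⁻¹ ≤ λ₁(S) + ρp, i.e. the smallest eigenvalue of the maximizer satisfies λ_p(Θ̂) ≥ 1/(λ₁(S) + ρp). -/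
/-!
Let `v` be a unit eigenvector of `Θ̂` for its smallest eigenvalue `m > 0`. Along the ray
`Θ̂ + t vvᵀ` (`t ≥ 0`) the matrix stays positive definite, its determinant gets multiplied by
`1 + t / m`, `tr(SΘ)` grows by `t vᵀSv ≤ t λ₁(S)`, and the entrywise ℓ¹ norm grows by at most
`t ‖v‖₁² ≤ t p`. Maximality of `Θ̂` thus gives `log (1 + t / m) ≤ t (λ₁(S) + ρp)` for every
`t > 0`; since `log (1 + t / m) ≥ t / (m + t)`, letting `t → 0⁺` yields `1 / m ≤ λ₁(S) + ρp`.
-/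

open Matrix

open Finset Filter Topology

theorem Matrix.setOf_exists_mulVec_eq_smul_eq_spectrum_s11 {n : Type*} [Fintype n] [DecidableEq n]
    (A : Matrix n n ℝ) : {μ : ℝ | ∃ v : n → ℝ, v ≠ 0 ∧ A *ᵥ v = μ • v} = spectrum ℝ A := by
  ext μ
  rw [Set.mem_ofPred_eq, ← spectrum_toLin', ← Module.End.hasEigenvalue_iff_mem_spectrum,
    Module.End.hasEigenvalue_iff, Submodule.ne_bot_iff]
  simp only [Module.End.mem_eigenspace_iff, toLin'_apply]
  exact ⟨fun ⟨v, hv, h⟩ => ⟨v, h, hv⟩, fun ⟨v, h, hv⟩ => ⟨v, hv, h⟩⟩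

section Eigenvalues

variable {p : ℕ} {A : Matrix (Fin p) (Fin p) ℝ}

theorem maxEig_eq_sSup_spectrum : maxEig A = sSup (spectrum ℝ A) :=
  congrArg sSup A.setOf_exists_mulVec_eq_smul_eq_spectrum_s11

theorem minEig_eq_sInf_spectrum : minEig A = sInf (spectrum ℝ A) :=
  congrArg sInf A.setOf_exists_mulVec_eq_smul_eq_spectrum_s11

theorem dotProduct_mulVec_le_maxEig_mul (hA : A.IsHermitian) (v : Fin p → ℝ) :
    v ⬝ᵥ A *ᵥ v ≤ maxEig A * (v ⬝ᵥ v) := by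
  have hle : ∀ μ ∈ spectrum ℝ A, μ ≤ maxEig A := fun μ hμ => by
    rw [maxEig_eq_sSup_spectrum]
    exact le_csSup A.finite_real_spectrum.bddAbove hμ
  have hpsd : (algebraMap ℝ _ (maxEig A) - A).PosSemidef := by
    refine posSemidef_iff_isHermitian_and_spectrum_nonneg.mpr
      ⟨(IsSelfAdjoint.algebraMap _ (.all _)).sub hA, ?_⟩
    rw [← spectrum.singleton_sub_eq]
    rintro _ ⟨_, rfl, μ, hμ, rfl⟩
    exact sub_nonneg.mpr (hle μ hμ)
  simpa [sub_mulVec, Algebra.algebraMap_eq_smul_one, smul_mulVec, dotProduct_smul] using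
    hpsd.dotProduct_mulVec_nonneg v

theorem exists_dotProduct_self_eq_one_mulVec_eq_minEig_smul (hp : 0 < p) (hA : A.IsHermitian) :
    ∃ v : Fin p → ℝ, v ⬝ᵥ v = 1 ∧ A *ᵥ v = minEig A • v := by
  have hmem : minEig A ∈ spectrum ℝ A := by
    rw [minEig_eq_sInf_spectrum]
    exact Set.Nonempty.csInf_mem ⟨_, hA.eigenvalues_mem_spectrum_real ⟨0, hp⟩⟩
      A.finite_real_spectrum
  obtain ⟨i, hi⟩ := hA.spectrum_real_eq_range_eigenvalues ▸ hmem
  refine ⟨hA.eigenvectorBasis i, ?_, hi ▸ hA.mulVec_eigenvectorBasis i⟩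
  have h := real_inner_self_eq_norm_sq (hA.eigenvectorBasis i)
  rw [hA.eigenvectorBasis.orthonormal.1 i, EuclideanSpace.inner_eq_star_dotProduct] at h
  simpa using h

end Eigenvalues

section RankOne

variable {n : Type*} [Fintype n]

theorem Matrix.det_one_add_vecMulVec [DecidableEq n] {R : Type*} [CommRing R] (u w : n → R) :
    (1 + vecMulVec u w).det = 1 + w ⬝ᵥ u := by
  rw [vecMulVec_eq Unit]
  exact det_one_add_replicateCol_mul_replicateRow u w

theorem Matrix.det_add_smul_vecMulVec_of_mulVec_eq_smul [DecidableEq n] {K : Type*} [Field K]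
    {A : Matrix n n K} {v : n → K} {m : K} (hm : m ≠ 0) (hv : A *ᵥ v = m • v) (t : K) :
    (A + t • vecMulVec v v).det = A.det * (1 + t / m * (v ⬝ᵥ v)) := by
  have hfactor : A + t • vecMulVec v v = A * (1 + vecMulVec ((t / m) • v) v) := by
    rw [mul_add, mul_one, mul_vecMulVec, mulVec_smul, hv, smul_smul, div_mul_cancel₀ t hm,
      smul_vecMulVec]
  rw [hfactor, det_mul, det_one_add_vecMulVec, dotProduct_smul, smul_eq_mul]

theorem Matrix.PosDef.add_smul_vecMulVec_self {A : Matrix n n ℝ} (hA : A.PosDef) (v : n → ℝ)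
    {t : ℝ} (ht : 0 ≤ t) : (A + t • vecMulVec v v).PosDef :=
  hA.add_posSemidef ((posSemidef_vecMulVec_self_star v).smul ht)

theorem Matrix.trace_mul_vecMulVec_self {R : Type*} [CommSemiring R] (S : Matrix n n R)
    (v : n → R) : (S * vecMulVec v v).trace = v ⬝ᵥ S *ᵥ v := by
  rw [mul_vecMulVec, trace_vecMulVec, dotProduct_comm]

theorem sum_abs_add_smul_vecMulVec_le (A : Matrix n n ℝ) (v : n → ℝ) (t : ℝ) :
    ∑ j, ∑ k, |(A + t • vecMulVec v v) j k| ≤ ∑ j, ∑ k, |A j k| + |t| * (∑ j, |v j|) ^ 2 :=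
  calc ∑ j, ∑ k, |(A + t • vecMulVec v v) j k|
      ≤ ∑ j, ∑ k, (|A j k| + |t| * (|v j| * |v k|)) :=
        sum_le_sum fun j _ => sum_le_sum fun k _ => by
          simpa [abs_mul, vecMulVec_apply] using abs_add_le (A j k) (t * (v j * v k))
    _ = ∑ j, ∑ k, |A j k| + |t| * (∑ j, |v j|) ^ 2 := by
        simp only [sum_add_distrib, ← mul_sum, ← sum_mul, sq]

theorem sq_sum_abs_le_card_mul_dotProduct_self (v : n → ℝ) :
    (∑ j, |v j|) ^ 2 ≤ Fintype.card n * (v ⬝ᵥ v) := by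
  simpa [dotProduct, sq] using sq_sum_le_card_mul_sum_sq (s := univ) (f := fun j => |v j|)

end RankOne

theorem le_glassoObj_add_smul_vecMulVec {p : ℕ} {ρ : ℝ} (hρ : 0 ≤ ρ)
    (S : Matrix (Fin p) (Fin p) ℝ) {Θ : Matrix (Fin p) (Fin p) ℝ} (hΘ : Θ.det ≠ 0)
    {v : Fin p → ℝ} {m : ℝ} (hm : 0 < m) (hv : Θ *ᵥ v = m • v) (hv1 : v ⬝ᵥ v = 1)
    {t : ℝ} (ht : 0 ≤ t) :
    glassoObj ρ S Θ + Real.log (1 + t / m) - t * (v ⬝ᵥ S *ᵥ v + ρ * p) ≤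
      glassoObj ρ S (Θ + t • vecMulVec v v) := by
  have hdet := det_add_smul_vecMulVec_of_mulVec_eq_smul hm.ne' hv t
  rw [hv1, mul_one] at hdet
  have hlog : Real.log (Θ + t • vecMulVec v v).det = Real.log Θ.det + Real.log (1 + t / m) := by
    rw [hdet, Real.log_mul hΘ (by positivity)]
  have htrace : (S * (Θ + t • vecMulVec v v)).trace = (S * Θ).trace + t * (v ⬝ᵥ S *ᵥ v) := by
    rw [mul_add, trace_add, mul_smul_comm, trace_smul, trace_mul_vecMulVec_self, smul_eq_mul]
  have hl1 : ∑ j, ∑ k, |(Θ + t • vecMulVec v v) j k| ≤ ∑ j, ∑ k, |Θ j k| + t * p := by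
    have hcs := sq_sum_abs_le_card_mul_dotProduct_self v
    rw [hv1, Fintype.card_fin, mul_one] at hcs
    have hsum := sum_abs_add_smul_vecMulVec_le Θ v t
    rw [abs_of_nonneg ht] at hsum
    linarith [mul_le_mul_of_nonneg_left hcs ht]
  unfold glassoObj
  rw [hlog, htrace]
  linarith [mul_le_mul_of_nonneg_left hl1 hρ]

theorem inv_le_of_forall_log_one_add_div_le {m C : ℝ} (hm : 0 < m)
    (h : ∀ t > 0, Real.log (1 + t / m) ≤ t * C) : m⁻¹ ≤ C := by
  have hinv : ∀ t > 0, (m + t)⁻¹ ≤ C := fun t ht => by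
    have hlog := Real.one_sub_inv_le_log_of_pos (x := 1 + t / m) (by positivity)
    have hrw : 1 - (1 + t / m)⁻¹ = t * (m + t)⁻¹ := by field_simp; ring
    exact le_of_mul_le_mul_left (by linarith [h t ht]) ht
  have hlim : Tendsto (fun t => (m + t)⁻¹) (𝓝[>] 0) (𝓝 m⁻¹) := by
    have : Tendsto (fun t : ℝ => (m + t)⁻¹) (𝓝 0) (𝓝 (m + 0)⁻¹) :=
      ((continuous_const.add continuous_id).tendsto 0).inv₀ (by simpa using hm.ne')
    simpa using this.mono_left nhdsWithin_le_nhds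
  exact le_of_tendsto hlim (eventually_nhdsWithin_of_forall hinv)

theorem glasso_maximizer_smallest_eigenvalue_bound
    (p : ℕ) (hp : 1 ≤ p) (ρ : ℝ) (hρ : 0 < ρ)
    (S : Matrix (Fin p) (Fin p) ℝ) (hS : S.PosSemidef)
    (Θhat : Matrix (Fin p) (Fin p) ℝ) (hΘ : Θhat.PosDef)
    (hmax : ∀ Θ : Matrix (Fin p) (Fin p) ℝ, Θ.PosDef →
      glassoObj ρ S Θ ≤ glassoObj ρ S Θhat) :
    (minEig Θhat)⁻¹ ≤ maxEig S + ρ * p := by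
  obtain ⟨v, hv1, hv⟩ := exists_dotProduct_self_eq_one_mulVec_eq_minEig_smul hp hΘ.isHermitian
  have hm : 0 < minEig Θhat := by
    have hpos := hΘ.dotProduct_mulVec_pos (x := v) (by rintro rfl; simp at hv1)
    rwa [star_trivial, hv, dotProduct_smul, hv1, smul_eq_mul, mul_one] at hpos
  refine inv_le_of_forall_log_one_add_div_le hm fun t ht => ?_
  have hgain := le_glassoObj_add_smul_vecMulVec hρ.le S hΘ.det_pos.ne' hm hv hv1 ht.le
  have hopt := hmax _ (hΘ.add_smul_vecMulVec_self v ht.le)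
  have hrayleigh := dotProduct_mulVec_le_maxEig_mul hS.isHermitian v
  rw [hv1, mul_one] at hrayleigh
  linarith [mul_le_mul_of_nonneg_left hrayleigh ht.le]
end

section
/- Let p ≥ 1, ρ ≥ 0, let S ∈ ℝ^{p×p} be symmetric positive semidefinite, and suppose Θ₁ and Θ₂ are both symmetric positive definite p×p matrices maximizing the GLASSO objective Q_S(Θ) = log det Θ − tr(SΘ) − ρ ∑_{j,k=1}^p |Θ_{jk}| over all symmetric positive definite p×p matrices. Then Θ₁ = Θ₂, i.e. the GLASSO solution is unique. -/
open Matrix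

/-!
The objective is strictly concave on positive definite matrices: the trace term is linear, the
`ℓ¹` penalty is convex since `ρ ≥ 0`, and `log det` is strictly concave. For the latter, write
`A = s²` with `s = √A` and `B = s C s`; then `4ⁿ det A det B < det (A + B)²` reduces to
`4ⁿ det C < det (1 + C)²`, which is AM–GM `4λ < (1 + λ)²` on the eigenvalues `λ` of `C`,
strict at some eigenvalue because `C ≠ 1`. Two distinct maximizers would therefore be beaten by
their midpoint.
-/

namespace Matrix

open Unitary

variable {n 𝕜 : Type*} [Fintype n] [DecidableEq n] [RCLike 𝕜]

lemma IsHermitian.det_one_add {C : Matrix n n 𝕜} (hC : C.IsHermitian) :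
    (1 + C).det = ∏ i, (1 + (hC.eigenvalues i : 𝕜)) := by
  conv_lhs => rw [hC.spectral_theorem, ← map_one (conjStarAlgAut 𝕜 _ hC.eigenvectorUnitary),
    ← map_add, conjStarAlgAut_apply, det_mul_right_comm,
    mul_star_self_of_mem hC.eigenvectorUnitary.2, one_mul, ← diagonal_one, diagonal_add,
    det_diagonal]
  rfl

lemma IsHermitian.eq_one_of_eigenvalues_eq_one {C : Matrix n n 𝕜} (hC : C.IsHermitian)
    (h : ∀ i, hC.eigenvalues i = 1) : C = 1 := by
  rw [hC.spectral_theorem, ← map_one (conjStarAlgAut 𝕜 _ hC.eigenvectorUnitary),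
    ← diagonal_one]
  congr 2
  ext i
  simp [h]

lemma PosDef.four_pow_mul_det_lt_det_one_add_sq {C : Matrix n n ℝ} (hC : C.PosDef)
    (hne : C ≠ 1) :
    4 ^ Fintype.card n * C.det < (1 + C).det ^ 2 := by
  obtain ⟨i, hi⟩ : ∃ i, hC.1.eigenvalues i ≠ 1 := by
    by_contra! h
    exact hne (hC.1.eq_one_of_eigenvalues_eq_one h)
  rw [hC.1.det_one_add, hC.1.det_eq_prod_eigenvalues, ← Finset.prod_pow, ← Finset.card_univ,
    ← Finset.prod_const, ← Finset.prod_mul_distrib]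
  refine Finset.prod_lt_prod (fun j _ => by simpa using mul_pos four_pos (hC.eigenvalues_pos j))
    (fun j _ => by simpa using four_mul_le_sq_add 1 (hC.1.eigenvalues j))
    ⟨i, Finset.mem_univ _, ?_⟩
  have : 0 < (1 - hC.1.eigenvalues i) ^ 2 := sq_pos_of_ne_zero (sub_ne_zero.2 hi.symm)
  simp only [RCLike.ofReal_real_eq_id, id]
  nlinarith

open scoped MatrixOrder in
lemma PosDef.four_pow_mul_det_mul_det_lt_det_add_sq {A B : Matrix n n ℝ} (hA : A.PosDef)
    (hB : B.PosDef) (hne : A ≠ B) :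
    4 ^ Fintype.card n * (A.det * B.det) < (A + B).det ^ 2 := by
  set s := CFC.sqrt A
  have hss : s * s = A := CFC.sqrt_mul_sqrt_self A hA.posSemidef.nonneg
  have hs : s.IsHermitian := (CFC.sqrt_nonneg A).posSemidef.isHermitian
  have hs_det : s.det ≠ 0 := by
    rw [← mul_self_pos, ← det_mul, hss]
    exact hA.det_pos
  have hs_unit : IsUnit s.det := isUnit_iff_ne_zero.2 hs_det
  set C := s⁻¹ * B * s⁻¹
  have hBC : B = s * C * s := by
    simp only [C, ← mul_assoc, mul_nonsing_inv _ hs_unit, one_mul]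
    rw [mul_assoc, nonsing_inv_mul _ hs_unit, mul_one]
  have hC : C.PosDef := by
    have hs_inv : IsUnit s⁻¹ := (isUnit_iff_isUnit_det _).2 (isUnit_nonsing_inv_det _ hs_unit)
    have := hs_inv.posDef_star_right_conjugate_iff.2 hB
    rwa [star_eq_conjTranspose, hs.inv.eq] at this
  have hC1 : C ≠ 1 := fun h => hne (by rw [hBC, h, mul_one, hss])
  have hAB : A + B = s * (1 + C) * s := by rw [hBC, ← hss]; noncomm_ring
  have key := hC.four_pow_mul_det_lt_det_one_add_sq hC1
  rw [hAB, hBC, ← hss]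
  simp only [det_mul]
  calc 4 ^ Fintype.card n * (s.det * s.det * (s.det * C.det * s.det))
      = s.det ^ 4 * (4 ^ Fintype.card n * C.det) := by ring
    _ < s.det ^ 4 * (1 + C).det ^ 2 := by gcongr
    _ = (s.det * (1 + C).det * s.det) ^ 2 := by ring

lemma PosDef.log_det_add_log_det_lt {A B : Matrix n n ℝ} (hA : A.PosDef) (hB : B.PosDef)
    (hne : A ≠ B) :
    Real.log A.det + Real.log B.det < 2 * Real.log ((2⁻¹ : ℝ) • (A + B)).det := by
  have hdet : ((2⁻¹ : ℝ) • (A + B)).det ^ 2 * 4 ^ Fintype.card n = (A + B).det ^ 2 := by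
    rw [det_smul, mul_pow, mul_right_comm, ← pow_mul, mul_comm _ 2, pow_mul, ← mul_pow]
    norm_num
  have hlt : A.det * B.det < ((2⁻¹ : ℝ) • (A + B)).det ^ 2 := by
    refine lt_of_mul_lt_mul_left ?_ (by positivity : (0 : ℝ) ≤ 4 ^ Fintype.card n)
    rw [mul_comm _ (_ ^ 2), hdet]
    exact hA.four_pow_mul_det_mul_det_lt_det_add_sq hB hne
  calc Real.log A.det + Real.log B.det = Real.log (A.det * B.det) :=
        (Real.log_mul hA.det_pos.ne' hB.det_pos.ne').symm
    _ < Real.log (((2⁻¹ : ℝ) • (A + B)).det ^ 2) :=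
        Real.log_lt_log (mul_pos hA.det_pos hB.det_pos) hlt
    _ = 2 * Real.log ((2⁻¹ : ℝ) • (A + B)).det := by rw [Real.log_pow, Nat.cast_ofNat]

end Matrix

lemma glassoObj_add_lt_two_mul_glassoObj_midpoint {p : ℕ} {ρ : ℝ} (hρ : 0 ≤ ρ)
    (S : Matrix (Fin p) (Fin p) ℝ) {A B : Matrix (Fin p) (Fin p) ℝ} (hA : A.PosDef)
    (hB : B.PosDef) (hne : A ≠ B) :
    glassoObj ρ S A + glassoObj ρ S B < 2 * glassoObj ρ S ((2⁻¹ : ℝ) • (A + B)) := by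
  have hlog := hA.log_det_add_log_det_lt hB hne
  have htrace : 2 * (S * ((2⁻¹ : ℝ) • (A + B))).trace = (S * A).trace + (S * B).trace := by
    simp only [Matrix.mul_smul, Matrix.mul_add, trace_smul, trace_add, smul_eq_mul]
    ring
  have hl1 : 2 * ∑ j, ∑ k, |((2⁻¹ : ℝ) • (A + B)) j k|
      ≤ ∑ j, ∑ k, |A j k| + ∑ j, ∑ k, |B j k| := by
    calc 2 * ∑ j, ∑ k, |((2⁻¹ : ℝ) • (A + B)) j k| = ∑ j, ∑ k, |A j k + B j k| := by
          simp only [Finset.mul_sum, Matrix.smul_apply, Matrix.add_apply, smul_eq_mul, abs_mul,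
            abs_inv, abs_two, mul_inv_cancel_left₀ (two_ne_zero (α := ℝ))]
      _ ≤ ∑ j, ∑ k, (|A j k| + |B j k|) := by gcongr; exact abs_add_le _ _
      _ = ∑ j, ∑ k, |A j k| + ∑ j, ∑ k, |B j k| := by simp only [Finset.sum_add_distrib]
  unfold glassoObj
  linarith [mul_le_mul_of_nonneg_left hl1 hρ]

theorem glasso_solution_unique_general
    (p : ℕ) (ρ : ℝ) (hρ : 0 ≤ ρ)
    (S : Matrix (Fin p) (Fin p) ℝ)
    (Θ₁ Θ₂ : Matrix (Fin p) (Fin p) ℝ) (hΘ₁ : Θ₁.PosDef) (hΘ₂ : Θ₂.PosDef)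
    (hmax₁ : ∀ Θ : Matrix (Fin p) (Fin p) ℝ, Θ.PosDef →
      glassoObj ρ S Θ ≤ glassoObj ρ S Θ₁)
    (hmax₂ : ∀ Θ : Matrix (Fin p) (Fin p) ℝ, Θ.PosDef →
      glassoObj ρ S Θ ≤ glassoObj ρ S Θ₂) :
    Θ₁ = Θ₂ := by
  by_contra hne
  have hmid : ((2⁻¹ : ℝ) • (Θ₁ + Θ₂)).PosDef := (hΘ₁.add hΘ₂).smul (by norm_num)
  have := glassoObj_add_lt_two_mul_glassoObj_midpoint hρ S hΘ₁ hΘ₂ hne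
  linarith [hmax₁ _ hmid, hmax₂ _ hmid]

theorem glasso_solution_unique
    (p : ℕ) (hp : 1 ≤ p) (ρ : ℝ) (hρ : 0 ≤ ρ)
    (S : Matrix (Fin p) (Fin p) ℝ) (hS : S.PosSemidef)
    (Θ₁ Θ₂ : Matrix (Fin p) (Fin p) ℝ) (hΘ₁ : Θ₁.PosDef) (hΘ₂ : Θ₂.PosDef)
    (hmax₁ : ∀ Θ : Matrix (Fin p) (Fin p) ℝ, Θ.PosDef →
      glassoObj ρ S Θ ≤ glassoObj ρ S Θ₁)
    (hmax₂ : ∀ Θ : Matrix (Fin p) (Fin p) ℝ, Θ.PosDef →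
      glassoObj ρ S Θ ≤ glassoObj ρ S Θ₂) :
    Θ₁ = Θ₂ :=
  glasso_solution_unique_general p ρ hρ S Θ₁ Θ₂ hΘ₁ hΘ₂ hmax₁ hmax₂
end
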